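/- Every discrete phase-type (PH) distribution on ℕ belongs to F_alg, the class of probability distributions on ℕ given by normalized ℝ₊-algebraic sequences (equivalently, produced by stochastic context-free grammars over a one-letter alphabet). -/

import Mathlib

open Matrix Filter

/-- `p` is a probability distribution on ℕ. -/
def IsProbDist (p : ℕ → ℝ) : Prop :=
  (∀ n, 0 ≤ p n) ∧ HasSum p 1

/-- `p` is a discrete phase-type (PH) distribution on ℕ. -/
def IsPH (p : ℕ → ℝ) : Prop :=
  IsProbDist p ∧
  ∃ m : ℕ, 1 ≤ m ∧
    ∃ (α : Fin m → ℝ) (T : Matrix (Fin m) (Fin m) ℝ),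
      (∀ i, 0 ≤ α i) ∧ (∑ i, α i) ≤ 1 ∧
      (∀ i j, 0 ≤ T i j) ∧ (∀ i, (∑ j, T i j) ≤ 1) ∧
      p 0 = 1 - ∑ i, α i ∧
      ∀ n, 1 ≤ n → p n = α ⬝ᵥ (T ^ (n - 1)).mulVec (fun i => 1 - ∑ j, T i j)

/-- One step of the SCFG fixed-point iteration: substitute the power series
`f W` for the variable `y_W` and `PowerSeries.X` for the variable `z`
(`none` encodes `z`, `some W` encodes `y_W`). -/
noncomputable def grammarStep {V : Type} (P : V → MvPolynomial (Option V) ℝ)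
    (f : V → PowerSeries ℝ) (W : V) : PowerSeries ℝ :=
  MvPolynomial.aeval (fun o : Option V => o.elim PowerSeries.X f) (P W)

/-- The SCFG fixed-point iteration starting from the zero tuple. -/
noncomputable def grammarIter {V : Type} (P : V → MvPolynomial (Option V) ℝ) :
    ℕ → V → PowerSeries ℝ
  | 0 => fun _ => 0
  | k + 1 => grammarStep P (grammarIter P k)

/-- `q` belongs to `F_alg`: `q` is a normalized ℝ₊-algebraic sequence, i.e. it is
produced by a stochastic context-free grammar over a one-letter alphabet.  There
are a finite set `V` of nonterminals with start symbol `S` and polynomials `P W`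
with nonnegative coefficients in the variables `(y_W)` and `z` such that the
fixed-point iteration from the zero tuple converges coefficientwise to a tuple
`f` of power series with nonnegative coefficients satisfying `f_V = P_V(f, z)`,
the coefficients of `f S` have finite positive sum `s`, and `q n = [zⁿ](f S)/s`. -/
def MemFalg (q : ℕ → ℝ) : Prop :=
  ∃ (V : Type) (_ : Fintype V) (S : V) (P : V → MvPolynomial (Option V) ℝ)
    (f : V → PowerSeries ℝ),
    (∀ W d, 0 ≤ MvPolynomial.coeff d (P W)) ∧
    (∀ W (n : ℕ), Tendsto (fun k => PowerSeries.coeff (R := ℝ) n (grammarIter P k W))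
      atTop (nhds (PowerSeries.coeff (R := ℝ) n (f W)))) ∧
    (∀ W, f W = grammarStep P f W) ∧
    (∀ W (n : ℕ), 0 ≤ PowerSeries.coeff (R := ℝ) n (f W)) ∧
    ∃ s : ℝ, HasSum (fun n => PowerSeries.coeff (R := ℝ) n (f S)) s ∧ 0 < s ∧
      ∀ n, q n = PowerSeries.coeff (R := ℝ) n (f S) / s

/-!
A PH distribution is generated by a right-linear grammar: the start symbol `S` emits nothing
with probability `p 0` and moves to phase `i` with probability `αᵢ`, and phase `i` emits one
letter `z` and then either stops (probability `tᵢ`) or moves to phase `j` (probability `Tᵢⱼ`).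
The generating function of phase `i` is `Σₖ (Tᵏ t)ᵢ zᵏ⁺¹`, which solves the grammar equations.
Each phase equation carries a factor `z`, so after `k` iterations the iterate agrees with this
solution modulo `z ^ k`; this gives the coefficientwise convergence.
-/

open PowerSeries

theorem PowerSeries.tendsto_coeff_of_X_pow_dvd_sub {R ι : Type*} [CommRing R] [TopologicalSpace R]
    {l : Filter ι} {f : ι → R⟦X⟧} {g : R⟦X⟧} (h : ∀ n, ∀ᶠ k in l, X ^ n ∣ f k - g) (n : ℕ) :
    Tendsto (fun k => coeff n (f k)) l (nhds (coeff n g)) := by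
  refine tendsto_const_nhds.congr' ?_
  filter_upwards [h (n + 1)] with k hk
  have hcoeff := X_pow_dvd_iff.mp hk n n.lt_succ_self
  rwa [map_sub, sub_eq_zero, eq_comm] at hcoeff

namespace MvPolynomial

variable (σ R : Type*) [CommSemiring R] [PartialOrder R] [IsOrderedRing R]

def nonnegCoeffs : Subsemiring (MvPolynomial σ R) where
  carrier := {P | ∀ d, 0 ≤ coeff d P}
  zero_mem' d := by simp
  one_mem' d := by classical rw [coeff_one]; split_ifs <;> simp
  add_mem' hP hQ d := by rw [coeff_add]; exact add_nonneg (hP d) (hQ d)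
  mul_mem' hP hQ d := by
    classical rw [coeff_mul]; exact Finset.sum_nonneg fun x _ => mul_nonneg (hP _) (hQ _)

variable {σ R}

theorem C_mem_nonnegCoeffs {a : R} (ha : 0 ≤ a) : C a ∈ nonnegCoeffs σ R := fun d => by
  classical rw [coeff_C]; split_ifs <;> simp [ha]

theorem X_mem_nonnegCoeffs (i : σ) : X i ∈ nonnegCoeffs σ R := fun d => by
  classical rw [coeff_X]; split_ifs <;> simp

end MvPolynomial

theorem Matrix.pow_mulVec_nonneg {ι R : Type*} [Fintype ι] [DecidableEq ι] [CommSemiring R]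
    [PartialOrder R] [IsOrderedRing R] {T : Matrix ι ι R} {v : ι → R} (hT : ∀ i j, 0 ≤ T i j)
    (hv : 0 ≤ v) (k : ℕ) : 0 ≤ T ^ k *ᵥ v := by
  induction k with
  | zero => rwa [pow_zero, one_mulVec]
  | succ k ih =>
    rw [pow_succ', ← mulVec_mulVec]
    exact fun i => dotProduct_nonneg_of_nonneg (hT i) ih

section PhaseSeries

variable {ι R : Type*} [Fintype ι] [DecidableEq ι] [CommRing R] (T : Matrix ι ι R) (t : ι → R)

/-- The generating function of the absorption time from phase `i`: `Σₖ (Tᵏ t)ᵢ zᵏ⁺¹`. -/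
noncomputable def phaseSeries (i : ι) : R⟦X⟧ :=
  X * mk fun k => (T ^ k *ᵥ t) i

theorem phaseSeries_eq (i : ι) :
    phaseSeries T t i = X * (C (t i) + ∑ j, C (T i j) * phaseSeries T t j) := by
  rw [phaseSeries]
  congr 1
  ext (_ | k)
  · simp [phaseSeries]
  · rw [coeff_mk, pow_succ', ← mulVec_mulVec]
    simp [phaseSeries, coeff_C_mul, mulVec, dotProduct]

end PhaseSeries

section PhaseTypeGrammar

variable {ι : Type} [Fintype ι] (p₀ : ℝ) (α : ι → ℝ) (T : Matrix ι ι ℝ) (t : ι → ℝ)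

/-- The right-linear grammar of a PH distribution; `none` is the start symbol and `some i` the
phase `i`. In the polynomials, the variable `none` is `z` and `some W` is `y_W`. -/
noncomputable def phGrammar : Option ι → MvPolynomial (Option (Option ι)) ℝ
  | none => .C p₀ + ∑ i, .C (α i) * .X (some (some i))
  | some i => .X none * (.C (t i) + ∑ j, .C (T i j) * .X (some (some j)))

theorem grammarStep_phGrammar_none (g : Option ι → ℝ⟦X⟧) :
    grammarStep (phGrammar p₀ α T t) g none = C p₀ + ∑ i, C (α i) * g (some i) := by
  simp [grammarStep, phGrammar]

theorem grammarStep_phGrammar_some (g : Option ι → ℝ⟦X⟧) (i : ι) :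
    grammarStep (phGrammar p₀ α T t) g (some i) =
      X * (C (t i) + ∑ j, C (T i j) * g (some j)) := by
  simp [grammarStep, phGrammar]

variable {p₀ α T t} in
theorem phGrammar_coeff_nonneg (hp₀ : 0 ≤ p₀) (hα : 0 ≤ α) (hT : ∀ i j, 0 ≤ T i j) (ht : 0 ≤ t)
    (W : Option ι) (d) : 0 ≤ MvPolynomial.coeff d (phGrammar p₀ α T t W) := by
  have affine_mem (a : ℝ) (c : ι → ℝ) (ha : 0 ≤ a) (hc : 0 ≤ c) :
      MvPolynomial.C a + ∑ i, MvPolynomial.C (c i) * MvPolynomial.X (some (some i)) ∈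
        MvPolynomial.nonnegCoeffs (Option (Option ι)) ℝ :=
    add_mem (MvPolynomial.C_mem_nonnegCoeffs ha) <| sum_mem fun i _ =>
      mul_mem (MvPolynomial.C_mem_nonnegCoeffs (hc i)) (MvPolynomial.X_mem_nonnegCoeffs _)
  cases W with
  | none => exact affine_mem p₀ α hp₀ hα d
  | some i =>
    exact mul_mem (MvPolynomial.X_mem_nonnegCoeffs none) (affine_mem _ _ (ht i) (hT i)) d

variable [DecidableEq ι]

noncomputable def phSolution : Option ι → ℝ⟦X⟧
  | none => C p₀ + ∑ i, C (α i) * phaseSeries T t i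
  | some i => phaseSeries T t i

theorem phSolution_eq_grammarStep (W : Option ι) :
    phSolution p₀ α T t W = grammarStep (phGrammar p₀ α T t) (phSolution p₀ α T t) W := by
  cases W with
  | none => rw [grammarStep_phGrammar_none]; rfl
  | some i => rw [grammarStep_phGrammar_some]; exact phaseSeries_eq T t i

theorem X_pow_dvd_grammarIter_sub_phaseSeries (k : ℕ) (i : ι) :
    X ^ k ∣ grammarIter (phGrammar p₀ α T t) k (some i) - phaseSeries T t i := by
  induction k generalizing i with
  | zero => exact one_dvd _
  | succ k ih =>
    rw [grammarIter, grammarStep_phGrammar_some, phaseSeries_eq, ← mul_sub, pow_succ']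
    refine mul_dvd_mul_left X ?_
    simp only [add_sub_add_left_eq_sub, ← Finset.sum_sub_distrib, ← mul_sub]
    exact Finset.dvd_sum fun j _ => dvd_mul_of_dvd_right (ih j) _

theorem X_pow_dvd_grammarIter_succ_sub_phSolution (k : ℕ) (W : Option ι) :
    X ^ k ∣ grammarIter (phGrammar p₀ α T t) (k + 1) W - phSolution p₀ α T t W := by
  cases W with
  | none =>
    rw [grammarIter, grammarStep_phGrammar_none, phSolution, add_sub_add_left_eq_sub,
      ← Finset.sum_sub_distrib]
    simp only [← mul_sub]
    exact Finset.dvd_sum fun i _ =>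
      dvd_mul_of_dvd_right (X_pow_dvd_grammarIter_sub_phaseSeries p₀ α T t k i) _
  | some i =>
    exact (pow_dvd_pow X k.le_succ).trans (X_pow_dvd_grammarIter_sub_phaseSeries p₀ α T t _ i)

theorem tendsto_coeff_grammarIter_phGrammar (W : Option ι) (n : ℕ) :
    Tendsto (fun k => coeff n (grammarIter (phGrammar p₀ α T t) k W)) atTop
      (nhds (coeff n (phSolution p₀ α T t W))) := by
  refine tendsto_coeff_of_X_pow_dvd_sub (fun k => ?_) n
  filter_upwards [eventually_gt_atTop k] with j hj
  obtain ⟨i, rfl⟩ : ∃ i, j = i + 1 := ⟨j - 1, by omega⟩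
  exact (pow_dvd_pow X (by omega)).trans (X_pow_dvd_grammarIter_succ_sub_phSolution p₀ α T t i W)

theorem coeff_phSolution_none_zero : coeff 0 (phSolution p₀ α T t none) = p₀ := by
  simp [phSolution, phaseSeries]

theorem coeff_phSolution_none_succ (n : ℕ) :
    coeff (n + 1) (phSolution p₀ α T t none) = α ⬝ᵥ (T ^ n *ᵥ t) := by
  simp [phSolution, phaseSeries, coeff_C_mul, dotProduct]

variable {p₀ α T t}

theorem coeff_phSolution_nonneg (hp₀ : 0 ≤ p₀) (hα : 0 ≤ α) (hT : ∀ i j, 0 ≤ T i j) (ht : 0 ≤ t)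
    (W : Option ι) (n : ℕ) : 0 ≤ coeff n (phSolution p₀ α T t W) := by
  rcases W, n with ⟨_ | i, _ | n⟩
  · rw [coeff_phSolution_none_zero]; exact hp₀
  · rw [coeff_phSolution_none_succ]
    exact dotProduct_nonneg_of_nonneg hα (Matrix.pow_mulVec_nonneg hT ht n)
  · simp [phSolution, phaseSeries]
  · simpa [phSolution, phaseSeries] using Matrix.pow_mulVec_nonneg hT ht n i

end PhaseTypeGrammar

/-- Every discrete PH distribution on ℕ belongs to `F_alg`. -/
theorem ph_mem_falg (p : ℕ → ℝ) (hp : IsPH p) : MemFalg p := by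
  obtain ⟨⟨hp_nonneg, hp_sum⟩, m, -, α, T, hα, -, hT, hT_row, -, hp_succ⟩ := hp
  set t : Fin m → ℝ := fun i => 1 - ∑ j, T i j
  have ht : 0 ≤ t := fun i => sub_nonneg.2 (hT_row i)
  have hstart : phSolution (p 0) α T t none = mk p := by
    ext (_ | n)
    · rw [coeff_phSolution_none_zero, coeff_mk]
    · rw [coeff_phSolution_none_succ, coeff_mk, hp_succ _ (Nat.le_add_left 1 n)]
      rfl
  refine ⟨Option (Fin m), inferInstance, none, phGrammar (p 0) α T t, phSolution (p 0) α T t,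
    phGrammar_coeff_nonneg (hp_nonneg 0) hα hT ht, tendsto_coeff_grammarIter_phGrammar _ _ _ _,
    phSolution_eq_grammarStep _ _ _ _, coeff_phSolution_nonneg (hp_nonneg 0) hα hT ht,
    1, ?_, one_pos, fun n => ?_⟩
  · simpa [hstart] using hp_sum
  · rw [hstart, coeff_mk, div_one]
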